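/- For every rooted tree T, the all-ones row vector (indexed by the 2-element subsets of {0,…,n}) equals Σ_{i=1}^{n} a_T^i − Σ_{v ∈ Int(T)} a_T^v, where the first sum is over the non-root leaves of T and the second over the internal vertices of T; in particular, the all-ones vector lies in the ℚ-rowspan of A_T. -/

import Mathlib

attribute [local instance] Classical.propDecidable

/-- A rooted tree on leaves `0, …, n`, rooted at the leaf `0`, with all edges directed
away from the root, no vertices of degree two, together with its (uniquely determined)
most-recent-common-ancestor function `lca` on leaf labels.  The parent map `par` sends
every non-root vertex to the vertex its unique incoming edge comes from, and fixes the
root.  A vertex `u` is a descendant of `v` iff some iterate of `par` sends `u` to `v`. -/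
structure PhyloTree where
  n : ℕ
  hn : 1 ≤ n
  V : Type
  fintypeV : Fintype V
  leaf : Fin (n + 1) ↪ V
  par : V → V
  par_root : par (leaf 0) = leaf 0
  par_ne : ∀ v : V, v ≠ leaf 0 → par v ≠ v
  reaches_root : ∀ v : V, ∃ k : ℕ, par^[k] v = leaf 0
  leaf_iff : ∀ v : V, v ≠ leaf 0 → (v ∈ Set.range leaf ↔ ∀ u, par u ≠ v)
  root_unique_child : ∃! u : V, u ≠ leaf 0 ∧ par u = leaf 0
  no_degree_two : ∀ v : V, v ∉ Set.range leaf → ∃ u w : V, u ≠ w ∧ par u = v ∧ par w = v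
  lca : Fin (n + 1) → Fin (n + 1) → V
  lca_anc_left : ∀ i j, ∃ k : ℕ, par^[k] (leaf i) = lca i j
  lca_anc_right : ∀ i j, ∃ k : ℕ, par^[k] (leaf j) = lca i j
  lca_min : ∀ i j (w : V), (∃ k : ℕ, par^[k] (leaf i) = w) →
      (∃ k : ℕ, par^[k] (leaf j) = w) → ∃ k : ℕ, par^[k] (lca i j) = w

instance (T : PhyloTree) : Fintype T.V := T.fintypeV

/-- `T.isAnc v u` : `v` is an ancestor of `u`, i.e. `u` is a descendant of `v`
(every vertex is a descendant of itself). -/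
def PhyloTree.isAnc (T : PhyloTree) (v u : T.V) : Prop := ∃ k : ℕ, T.par^[k] u = v

/-- The 2-element subsets `{i,j}` of `{0, …, n}`, encoded as ordered pairs `i < j`. -/
abbrev PairIdx (n : ℕ) := {q : Fin (n + 1) × Fin (n + 1) // q.1 < q.2}

/-- The non-root vertices of `T`; these index the rows of `A_T`, and are also in
bijection `v ↦ e(v)` with the edges of `T`, so they also index the rows of `B_T`. -/
abbrev PhyloTree.NR (T : PhyloTree) := {v : T.V // v ≠ T.leaf 0}

/-- The matrix `A_T`, with rows indexed by non-root vertices and columns indexed by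
2-element subsets `{i,j}` of `{0, …, n}`: the entry is `1` if `v = i`, `v = j` or
`v = lca(i,j)`, and `0` otherwise. -/
noncomputable def Amat (T : PhyloTree) (R : Type*) [Zero R] [One R] :
    Matrix T.NR (PairIdx T.n) R :=
  Matrix.of fun v s =>
    if v.1 = T.leaf s.1.1 ∨ v.1 = T.leaf s.1.2 ∨ v.1 = T.lca s.1.1 s.1.2 then 1 else 0

/-- `T.onPath v i j` : the edge `e(v)` lies on the unique path between the leaves
`i` and `j`, i.e. `v` lies strictly below `lca(i,j)` on the segment from `lca(i,j)`
down to `i` or on the segment from `lca(i,j)` down to `j`. -/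
def PhyloTree.onPath (T : PhyloTree) (v : T.V) (i j : Fin (T.n + 1)) : Prop :=
  v ≠ T.lca i j ∧ T.isAnc (T.lca i j) v ∧ (T.isAnc v (T.leaf i) ∨ T.isAnc v (T.leaf j))

/-- The matrix `B_T`, with rows indexed by the edges `e(v)` of `T` (equivalently, by the
non-root vertices `v`) and columns indexed by 2-element subsets `{i,j}` of `{0, …, n}`:
the entry is `1` if `e(v) ∈ P(i,j)` and `0` otherwise. -/
noncomputable def Bmat (T : PhyloTree) (R : Type*) [Zero R] [One R] :
    Matrix T.NR (PairIdx T.n) R :=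
  Matrix.of fun v s => if T.onPath v.1 s.1.1 s.1.2 then 1 else 0

/-- The monomial map `φ_M` associated to a nonnegative-integer matrix `M`, sending
`p_c` to `∏_r t_r ^ M(r,c)`. -/
noncomputable def toricMap {R C : Type*} [Fintype R] (M : Matrix R C ℕ) :
    MvPolynomial C ℂ →ₐ[ℂ] MvPolynomial R ℂ :=
  MvPolynomial.aeval fun c => ∏ r : R, MvPolynomial.X r ^ M r c
/-!
Column `{i, j}` of `A_T` has its ones exactly in the rows `i`, `j` and `lca(i, j)`, minus the
root row `0`. If `i = 0` then `lca(0, j)` is the root, so the column meets one non-root leaf row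
and no internal row. If `0 < i < j`, then `lca(i, j)` lies below the unique child of the root and
is an ancestor of two distinct leaves, so it is an internal vertex: two leaf rows and one
internal row. Either way the leaf rows minus the internal rows contribute `1`.
-/

namespace PhyloTree

variable (T : PhyloTree)

theorem iterate_par_root (k : ℕ) : T.par^[k] (T.leaf 0) = T.leaf 0 :=
  Function.iterate_fixed T.par_root k

theorem lca_zero_left (j : Fin (T.n + 1)) : T.lca 0 j = T.leaf 0 := by
  obtain ⟨k, hk⟩ := T.lca_anc_left 0 j
  rwa [iterate_par_root, eq_comm] at hk

theorem leaf_ne_root {i : Fin (T.n + 1)} (hi : i ≠ 0) : T.leaf i ≠ T.leaf 0 :=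
  fun h => hi (T.leaf.injective h)

variable {T}

theorem par_ne_leaf {i : Fin (T.n + 1)} (hi : i ≠ 0) (u : T.V) : T.par u ≠ T.leaf i :=
  (T.leaf_iff _ (T.leaf_ne_root hi)).mp ⟨i, rfl⟩ u

theorem eq_leaf_of_iterate_par_eq_leaf {i : Fin (T.n + 1)} (hi : i ≠ 0) {v : T.V} {k : ℕ}
    (h : T.par^[k] v = T.leaf i) : v = T.leaf i := by
  cases k with
  | zero => exact h
  | succ k =>
    rw [Function.iterate_succ_apply'] at h
    exact absurd h (par_ne_leaf hi _)

theorem isAnc_of_forall_par_eq_root {u : T.V}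
    (hu : ∀ w, w ≠ T.leaf 0 ∧ T.par w = T.leaf 0 → w = u) {v : T.V} (hv : v ≠ T.leaf 0) :
    T.isAnc u v := by
  obtain ⟨k, hk⟩ := T.reaches_root v
  induction k generalizing v with
  | zero => exact absurd hk hv
  | succ k ih =>
    rw [Function.iterate_succ_apply] at hk
    by_cases hp : T.par v = T.leaf 0
    · exact ⟨0, hu v ⟨hv, hp⟩⟩
    · obtain ⟨m, hm⟩ := ih hp hk
      exact ⟨m + 1, hm⟩

theorem lca_ne_root {i j : Fin (T.n + 1)} (hi : i ≠ 0) (hj : j ≠ 0) :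
    T.lca i j ≠ T.leaf 0 := by
  obtain ⟨u, ⟨hu, -⟩, huniq⟩ := T.root_unique_child
  obtain ⟨k, hk⟩ := T.lca_min i j u (isAnc_of_forall_par_eq_root huniq (T.leaf_ne_root hi))
    (isAnc_of_forall_par_eq_root huniq (T.leaf_ne_root hj))
  intro hroot
  rw [hroot, iterate_par_root] at hk
  exact hu hk.symm

theorem lca_not_mem_range_leaf {i j : Fin (T.n + 1)} (hi : i ≠ 0) (hj : j ≠ 0)
    (hij : i ≠ j) : T.lca i j ∉ Set.range T.leaf := by
  rintro ⟨m, hm⟩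
  have hm0 : m ≠ 0 := by
    rintro rfl
    exact lca_ne_root hi hj hm.symm
  obtain ⟨ki, hki⟩ := T.lca_anc_left i j
  obtain ⟨kj, hkj⟩ := T.lca_anc_right i j
  rw [← hm] at hki hkj
  exact hij (T.leaf.injective
    ((eq_leaf_of_iterate_par_eq_leaf hm0 hki).trans (eq_leaf_of_iterate_par_eq_leaf hm0 hkj).symm))

open Finset

/-- Row `v` of `A_T` has a one in column `{i, j}`. -/
def HitsPair (v : T.V) (i j : Fin (T.n + 1)) : Prop :=
  v = T.leaf i ∨ v = T.leaf j ∨ v = T.lca i j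

theorem sum_filter_Amat_apply (p : T.NR → Prop) [DecidablePred p] (s : PairIdx T.n) :
    (∑ k ∈ univ.filter p, Amat T ℚ k) s = #{v | p v ∧ HitsPair v.1 s.1.1 s.1.2} := by
  rw [sum_apply (g := fun k => (Amat T ℚ k : PairIdx T.n → ℚ))]
  simp only [Amat, Matrix.of_apply, sum_boole, filter_filter, HitsPair]
  congr

theorem card_leaf_rows_hitting (s : PairIdx T.n) :
    #{v : T.NR | v.1 ∈ Set.range T.leaf ∧ HitsPair v.1 s.1.1 s.1.2} =
      if s.1.1 = 0 then 1 else 2 := by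
  obtain ⟨⟨i, j⟩, hij⟩ := s
  have hj : j ≠ 0 := ((Fin.zero_le i).trans_lt hij).ne'
  dsimp only
  split_ifs with hi
  · subst hi
    rw [card_eq_one]
    refine ⟨⟨T.leaf j, T.leaf_ne_root hj⟩, ?_⟩
    ext ⟨v, hv⟩
    simp only [HitsPair, lca_zero_left, mem_filter, mem_univ, true_and, mem_singleton]
    grind
  · have hL := lca_not_mem_range_leaf hi hj hij.ne
    rw [card_eq_two]
    refine ⟨⟨T.leaf i, T.leaf_ne_root hi⟩, ⟨T.leaf j, T.leaf_ne_root hj⟩, ?_, ?_⟩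
    · simpa using hij.ne
    ext ⟨v, hv⟩
    simp only [HitsPair, mem_insert, mem_singleton]
    grind

theorem card_internal_rows_hitting (s : PairIdx T.n) :
    #{v : T.NR | v.1 ∉ Set.range T.leaf ∧ HitsPair v.1 s.1.1 s.1.2} =
      if s.1.1 = 0 then 0 else 1 := by
  obtain ⟨⟨i, j⟩, hij⟩ := s
  have hj : j ≠ 0 := ((Fin.zero_le i).trans_lt hij).ne'
  dsimp only
  split_ifs with hi
  · subst hi
    rw [card_eq_zero]
    ext ⟨v, hv⟩
    simp only [HitsPair, lca_zero_left, mem_filter, mem_univ, true_and, notMem_empty, iff_false]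
    grind
  · have hL := lca_not_mem_range_leaf hi hj hij.ne
    rw [card_eq_one]
    refine ⟨⟨T.lca i j, lca_ne_root hi hj⟩, ?_⟩
    ext ⟨v, hv⟩
    simp only [HitsPair, mem_singleton]
    grind

theorem sum_leaf_rows_sub_sum_internal_rows_Amat :
    (∑ k ∈ univ.filter (fun k : T.NR => k.1 ∈ Set.range T.leaf), Amat T ℚ k)
      - ∑ k ∈ univ.filter (fun k : T.NR => k.1 ∉ Set.range T.leaf), Amat T ℚ k =
      fun _ => 1 := by
  funext s
  rw [Pi.sub_apply, sum_filter_Amat_apply, sum_filter_Amat_apply, card_leaf_rows_hitting,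
    card_internal_rows_hitting]
  split_ifs <;> norm_num

end PhyloTree

/-- For every rooted tree `T`, the all-ones row vector indexed by the 2-element subsets
of `{0, …, n}` equals `∑_{i=1}^n a_T^i − ∑_{v ∈ Int(T)} a_T^v`, the first sum being over
the non-root leaves and the second over the internal vertices of `T`; in particular the
all-ones vector lies in the `ℚ`-rowspan of `A_T`. -/
theorem statement7 (T : PhyloTree) :
    ((fun _ => 1 : PairIdx T.n → ℚ) =
      (∑ k ∈ Finset.univ.filter (fun k : T.NR => k.1 ∈ Set.range T.leaf), Amat T ℚ k)
      - ∑ k ∈ Finset.univ.filter (fun k : T.NR => k.1 ∉ Set.range T.leaf), Amat T ℚ k) ∧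
    (fun _ => 1 : PairIdx T.n → ℚ) ∈ Submodule.span ℚ (Set.range (Amat T ℚ)) := by
  rw [← T.sum_leaf_rows_sub_sum_internal_rows_Amat]
  refine ⟨rfl, Submodule.sub_mem _ ?_ ?_⟩ <;>
    exact Submodule.sum_mem _ fun k _ => Submodule.subset_span ⟨k, rfl⟩
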